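/- Let M₁, …, M_Q ∈ Matrix (Fin n) (Fin n) ℂ, θ₁, …, θ_Q ∈ ℝ, and M = Σ_{j=1}^{Q} θ_j M_j. Then for every nonzero v ∈ ℂⁿ, Σ_{1 ≤ j ≤ m ≤ Q} (2 − δ_{j,m})·θ_j·θ_m·(v* ((M_j* M_m)^H) v)/(v* v) ≥ σ_min(M)², where σ_min(M) is the smallest singular value of M. Consequently, for any finite family of nonzero vectors v₁, …, v_k ∈ ℂⁿ, the SCM upper bound σ_min^UB² = min_{ℓ∈[k]} Σ_{j ≤ m} (2 − δ_{j,m}) θ_j θ_m (v_ℓ* (M_j* M_m)^H v_ℓ)/(v_ℓ* v_ℓ) satisfies σ_min^UB² ≥ σ_min(M)². -/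

import Mathlib

open Matrix

/-- Euclidean (ℓ²) norm of a complex vector. -/
noncomputable def vecNorm {n : ℕ} (v : Fin n → ℂ) : ℝ :=
  Real.sqrt (∑ i, ‖v i‖ ^ 2)

/-- Smallest singular value of a square complex matrix. -/
noncomputable def sigmaMin {n : ℕ} (M : Matrix (Fin n) (Fin n) ℂ) : ℝ :=
  ⨅ v : {v : Fin n → ℂ // vecNorm v = 1}, vecNorm (M.mulVec v.1)

/-- Hermitian part `N^H = (N + N*)/2` of a square complex matrix. -/
noncomputable def hermPart {n : ℕ} (N : Matrix (Fin n) (Fin n) ℂ) :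
    Matrix (Fin n) (Fin n) ℂ :=
  (2⁻¹ : ℂ) • (N + Nᴴ)

/-!
Expanding `M = ∑ θ_j M_j` gives `‖M v‖² = ∑_{j,m} θ_j θ_m v* M_j* M_m v`. Only real parts matter,
and `Re (v* N* v) = Re (v* N v)`, so the `(j, m)` and `(m, j)` terms coincide: folding the double sum
onto `j ≤ m` produces the weights `2 - δ_{j,m}` and lets `M_j* M_m` be replaced by its Hermitian
part. The objective is therefore the Rayleigh quotient `‖M v‖² / ‖v‖²`, which is at least
`σ_min(M)²` because `v / ‖v‖` is a unit vector.
-/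

open Finset

theorem sum_Ici_ite_mul_eq_sum_sum {ι R : Type*} [Fintype ι] [LinearOrder ι]
    [LocallyFiniteOrderTop ι] [LocallyFiniteOrderBot ι] [NonAssocSemiring R]
    (f : ι → ι → R) (hf : ∀ j m, f j m = f m j) :
    ∑ j, ∑ m ∈ Ici j, (if j = m then 1 else 2 : R) * f j m = ∑ j, ∑ m, f j m := by
  have hdiag (j : ι) : ∑ m ∈ Ici j, (if j = m then 1 else 2 : R) * f j m
      = ∑ m ∈ Ici j, f j m + ∑ m ∈ Ioi j, f j m := by
    rw [Ici_eq_cons_Ioi, sum_cons, sum_cons, if_pos rfl, one_mul, add_assoc, ← two_mul,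
      mul_sum]
    congr 1
    exact sum_congr rfl fun m hm => by rw [if_neg (mem_Ioi.mp hm).ne]
  have hlower : ∑ j, ∑ m ∈ Iio j, f j m = ∑ j, ∑ m ∈ Ioi j, f j m := by
    rw [sum_comm' (t' := univ) (s' := Ioi) (by simp)]
    exact sum_congr rfl fun j _ => sum_congr rfl fun m _ => hf m j
  have hsplit (j : ι) : ∑ m, f j m = ∑ m ∈ Ici j, f j m + ∑ m ∈ Iio j, f j m := by
    rw [← sum_add_sum_compl (Ici j)]
    congr 2
    ext; simp
  simp only [hdiag, hsplit, sum_add_distrib, hlower]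

theorem star_dotProduct_conjTranspose_mulVec {n R : Type*} [Fintype n] [CommSemiring R]
    [StarRing R] (N : Matrix n n R) (v : n → R) :
    star v ⬝ᵥ Nᴴ *ᵥ v = star (star v ⬝ᵥ N *ᵥ v) := by
  rw [mulVec_conjTranspose, dotProduct_star, star_star, dotProduct_mulVec]

theorem re_star_dotProduct_conjTranspose_mulVec {n : Type*} [Fintype n] (N : Matrix n n ℂ)
    (v : n → ℂ) : (star v ⬝ᵥ Nᴴ *ᵥ v).re = (star v ⬝ᵥ N *ᵥ v).re := by
  rw [star_dotProduct_conjTranspose_mulVec, Complex.star_def, Complex.conj_re]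

theorem re_dotProduct_hermPart_mulVec {n : ℕ} (N : Matrix (Fin n) (Fin n) ℂ) (v : Fin n → ℂ) :
    (star v ⬝ᵥ hermPart N *ᵥ v).re = (star v ⬝ᵥ N *ᵥ v).re := by
  rw [hermPart, smul_mulVec, dotProduct_smul, add_mulVec, dotProduct_add,
    star_dotProduct_conjTranspose_mulVec, Complex.star_def, Complex.add_conj]
  simp

theorem re_star_mulVec_dotProduct_mulVec_sum_smul {ι n : Type*} [Fintype ι] [Fintype n]
    (M : ι → Matrix n n ℂ) (θ : ι → ℝ) (v : n → ℂ) :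
    (star ((∑ j, (θ j : ℂ) • M j) *ᵥ v) ⬝ᵥ (∑ j, (θ j : ℂ) • M j) *ᵥ v).re
      = ∑ j, ∑ m, θ j * θ m * (star v ⬝ᵥ ((M j)ᴴ * M m) *ᵥ v).re := by
  have hexpand : (∑ j, (θ j : ℂ) • M j) *ᵥ v = ∑ j, (θ j : ℂ) • (M j *ᵥ v) := by
    simp only [sum_mulVec, smul_mulVec]
  have hpair (j m : ι) : star (M j *ᵥ v) ⬝ᵥ M m *ᵥ v = star v ⬝ᵥ ((M j)ᴴ * M m) *ᵥ v := by
    rw [star_mulVec, ← dotProduct_mulVec, mulVec_mulVec]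
  rw [hexpand, star_sum, sum_dotProduct]
  simp only [dotProduct_sum, Complex.re_sum, star_smul, Complex.star_def, Complex.conj_ofReal,
    smul_dotProduct, dotProduct_smul, hpair]
  simp [mul_assoc, mul_left_comm]

theorem vecNorm_eq_norm_toLp {n : ℕ} (v : Fin n → ℂ) :
    vecNorm v = ‖(WithLp.toLp 2 v : EuclideanSpace ℂ (Fin n))‖ :=
  (EuclideanSpace.norm_eq _).symm

theorem vecNorm_sq {n : ℕ} (v : Fin n → ℂ) : vecNorm v ^ 2 = ∑ i, ‖v i‖ ^ 2 :=
  Real.sq_sqrt (by positivity)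

theorem re_star_dotProduct_self {n : ℕ} (w : Fin n → ℂ) : (star w ⬝ᵥ w).re = vecNorm w ^ 2 := by
  simp [vecNorm_sq, dotProduct, Complex.re_sum, Complex.sq_norm, Complex.normSq_apply]

theorem vecNorm_smul {n : ℕ} (c : ℂ) (v : Fin n → ℂ) : vecNorm (c • v) = ‖c‖ * vecNorm v := by
  rw [vecNorm_eq_norm_toLp, vecNorm_eq_norm_toLp, WithLp.toLp_smul, norm_smul]

theorem vecNorm_pos {n : ℕ} {v : Fin n → ℂ} (hv : v ≠ 0) : 0 < vecNorm v := by
  rw [vecNorm_eq_norm_toLp, norm_pos_iff]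
  simpa using hv

theorem sigmaMin_nonneg {n : ℕ} (A : Matrix (Fin n) (Fin n) ℂ) : 0 ≤ sigmaMin A :=
  Real.iInf_nonneg fun _ => Real.sqrt_nonneg _

theorem sigmaMin_mul_vecNorm_le {n : ℕ} (A : Matrix (Fin n) (Fin n) ℂ) (v : Fin n → ℂ) :
    sigmaMin A * vecNorm v ≤ vecNorm (A *ᵥ v) := by
  rcases eq_or_ne v 0 with rfl | hv
  · simp [vecNorm]
  have hr := vecNorm_pos hv
  have hnorm : ‖(((vecNorm v)⁻¹ : ℝ) : ℂ)‖ = (vecNorm v)⁻¹ := by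
    rw [Complex.norm_real, Real.norm_of_nonneg (inv_nonneg.2 hr.le)]
  have hunit : vecNorm ((((vecNorm v)⁻¹ : ℝ) : ℂ) • v) = 1 := by
    rw [vecNorm_smul, hnorm, inv_mul_cancel₀ hr.ne']
  have hbdd : BddBelow (Set.range fun u : {u : Fin n → ℂ // vecNorm u = 1} =>
      vecNorm (A *ᵥ u.1)) :=
    ⟨0, by rintro _ ⟨u, rfl⟩; exact Real.sqrt_nonneg _⟩
  have hle : sigmaMin A ≤ vecNorm (A *ᵥ ((((vecNorm v)⁻¹ : ℝ) : ℂ) • v)) :=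
    ciInf_le hbdd ⟨_, hunit⟩
  rwa [mulVec_smul, vecNorm_smul, hnorm, inv_mul_eq_div, le_div_iff₀ hr] at hle

theorem sigmaMin_sq_le_div {n : ℕ} (A : Matrix (Fin n) (Fin n) ℂ) {v : Fin n → ℂ}
    (hv : v ≠ 0) : sigmaMin A ^ 2 ≤ vecNorm (A *ᵥ v) ^ 2 / vecNorm v ^ 2 := by
  rw [le_div_iff₀ (pow_pos (vecNorm_pos hv) 2), ← mul_pow]
  exact pow_le_pow_left₀ (mul_nonneg (sigmaMin_nonneg A) (vecNorm_pos hv).le)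
    (sigmaMin_mul_vecNorm_le A v) 2

theorem sum_Ici_re_hermPart_eq_vecNorm_sq {n Q : ℕ} (M : Fin Q → Matrix (Fin n) (Fin n) ℂ)
    (θ : Fin Q → ℝ) (v : Fin n → ℂ) :
    ∑ j, ∑ m ∈ Ici j, (if j = m then 1 else 2 : ℝ) * θ j * θ m *
        (star v ⬝ᵥ (hermPart ((M j)ᴴ * M m)) *ᵥ v).re
      = vecNorm ((∑ j, (θ j : ℂ) • M j) *ᵥ v) ^ 2 := by
  have hsymm (j m : Fin Q) : θ j * θ m * (star v ⬝ᵥ ((M j)ᴴ * M m) *ᵥ v).re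
      = θ m * θ j * (star v ⬝ᵥ ((M m)ᴴ * M j) *ᵥ v).re := by
    rw [← re_star_dotProduct_conjTranspose_mulVec ((M m)ᴴ * M j), conjTranspose_mul,
      conjTranspose_conjTranspose, mul_comm (θ j)]
  calc _ = ∑ j, ∑ m ∈ Ici j, (if j = m then 1 else 2 : ℝ) *
          (θ j * θ m * (star v ⬝ᵥ ((M j)ᴴ * M m) *ᵥ v).re) := by
        simp only [re_dotProduct_hermPart_mulVec, mul_assoc]
    _ = ∑ j, ∑ m, θ j * θ m * (star v ⬝ᵥ ((M j)ᴴ * M m) *ᵥ v).re :=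
        sum_Ici_ite_mul_eq_sum_sum _ hsymm
    _ = _ := by rw [← re_star_mulVec_dotProduct_mulVec_sum_smul, re_star_dotProduct_self]

/-- The SCM objective evaluated at the Rayleigh-quotient vector of any nonzero `v`
is an upper bound for `σ_min(M)²`; consequently the SCM upper bound, the minimum of
this quantity over a finite family of nonzero vectors, is also an upper bound. -/
theorem stmt6 {n Q : ℕ} (M : Fin Q → Matrix (Fin n) (Fin n) ℂ) (θ : Fin Q → ℝ) :
    (∀ v : Fin n → ℂ, v ≠ 0 →
      sigmaMin (∑ j, (θ j : ℂ) • M j) ^ 2 ≤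
        ∑ j : Fin Q, ∑ m ∈ Finset.Ici j,
          (if j = m then 1 else 2 : ℝ) * θ j * θ m *
            ((star v ⬝ᵥ (hermPart ((M j)ᴴ * M m)).mulVec v).re / ∑ i, ‖v i‖ ^ 2)) ∧
      ∀ (k : ℕ), 0 < k → ∀ vs : Fin k → (Fin n → ℂ), (∀ ℓ, vs ℓ ≠ 0) →
        sigmaMin (∑ j, (θ j : ℂ) • M j) ^ 2 ≤
          ⨅ ℓ : Fin k, ∑ j : Fin Q, ∑ m ∈ Finset.Ici j,
            (if j = m then 1 else 2 : ℝ) * θ j * θ m *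
              ((star (vs ℓ) ⬝ᵥ (hermPart ((M j)ᴴ * M m)).mulVec (vs ℓ)).re
                / ∑ i, ‖vs ℓ i‖ ^ 2) := by
  have hbound (v : Fin n → ℂ) (hv : v ≠ 0) :
      sigmaMin (∑ j, (θ j : ℂ) • M j) ^ 2 ≤
        ∑ j : Fin Q, ∑ m ∈ Finset.Ici j,
          (if j = m then 1 else 2 : ℝ) * θ j * θ m *
            ((star v ⬝ᵥ (hermPart ((M j)ᴴ * M m)).mulVec v).re / ∑ i, ‖v i‖ ^ 2) := by
    simp only [← mul_div_assoc, ← sum_div]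
    rw [sum_Ici_re_hermPart_eq_vecNorm_sq, ← vecNorm_sq]
    exact sigmaMin_sq_le_div _ hv
  refine ⟨hbound, fun k hk vs hvs => ?_⟩
  have : Nonempty (Fin k) := Fin.pos_iff_nonempty.mp hk
  exact le_ciInf fun ℓ => hbound (vs ℓ) (hvs ℓ)
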